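/- Let λ ≠ 0. Define T : ℝ⁴ → ℝ⁴ by T(A)_0 = (2/λ) sinh(λ A_0 / 2) and T(A)_b = e^{λ A_0 / 2} A_b for b = 1,2,3, and define S : ℝ⁴ → ℝ⁴ by S(Ã)_0 = (2/λ) arcsinh(λ Ã_0 / 2) and S(Ã)_b = Ã_b / g(λ Ã_0 / 2) for b = 1,2,3, where g(z) = √(z²+1) + z. Let γ̃(Ã) be the 4×4 matrix with entries γ̃^0_0 = g(λÃ_0/2) − λÃ_0/2, γ̃^0_c = −λ Ã_c / 2 for c = 1,2,3, γ̃^l_l = g(λÃ_0/2) for l = 1,2,3, and all other entries zero; let ρ̃(Ã) be the 4×4 matrix with entries ρ̃^0_0 = 1/√((λÃ_0/2)² + 1), ρ̃^0_c = −g'(λÃ_0/2) λ Ã_c / 2 for c = 1,2,3 where g'(z) = (√(z²+1) + z)/√(z²+1), ρ̃^l_l = g(λÃ_0/2) for l = 1,2,3, and all other entries zero. Let γ, ρ be the κ-Minkowski matrices. Then: (a) T is a bijection of ℝ⁴ with inverse S; (b) for every A ∈ ℝ⁴ and all indices: γ̃^i_j(T(A)) = Σ_k γ^i_k(A) (∂T_j/∂A_k)(A)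 and ρ̃^i_a(T(A)) = Σ_s (∂S_s/∂Ã_i)(T(A)) ρ^s_a(A). (These are the Seiberg-Witten map relations connecting the two κ-Minkowski Poisson gauge models.) -/

import Mathlib

set_option autoImplicit false

open scoped BigOperators

/-- Partial derivative `∂_a u (x)` of `u : ℝ⁴ → ℝ`. -/
noncomputable def pd (a : Fin 4) (u : (Fin 4 → ℝ) → ℝ) (x : Fin 4 → ℝ) : ℝ :=
  fderiv ℝ u x (Pi.single a 1)

/-- `g(z) = √(z²+1) + z`. -/
noncomputable def gfun (z : ℝ) : ℝ := Real.sqrt (z ^ 2 + 1) + z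

/-- `g'(z) = (√(z²+1) + z)/√(z²+1)`. -/
noncomputable def gpfun (z : ℝ) : ℝ := (Real.sqrt (z ^ 2 + 1) + z) / Real.sqrt (z ^ 2 + 1)

/-- The κ-Minkowski matrix `γ(A)`: `γ^0_0 = 1`, `γ^0_c = −λ A_c` (c = 1,2,3),
`γ^l_c = δ^l_c` for `l = 1,2,3` (upper index = row). -/
def γκ (lam : ℝ) (A : Fin 4 → ℝ) : Matrix (Fin 4) (Fin 4) ℝ :=
  fun l c => if l = 0 then (if c = 0 then 1 else -lam * A c)
             else (if l = c then 1 else 0)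

/-- The κ-Minkowski matrix `ρ(A) = diag(1, e^{λA_0}, e^{λA_0}, e^{λA_0})`. -/
noncomputable def ρκ (lam : ℝ) (A : Fin 4 → ℝ) : Matrix (Fin 4) (Fin 4) ℝ :=
  fun m a => if m = a then (if m = 0 then 1 else Real.exp (lam * A 0)) else 0

/-- The field redefinition `T`: `T(A)_0 = (2/λ) sinh(λA_0/2)`, `T(A)_b = e^{λA_0/2} A_b`. -/
noncomputable def Tmap (lam : ℝ) (A : Fin 4 → ℝ) : Fin 4 → ℝ :=
  fun j => if j = 0 then (2 / lam) * Real.sinh (lam * A 0 / 2)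
           else Real.exp (lam * A 0 / 2) * A j

/-- The inverse redefinition `S`: `S(Ã)_0 = (2/λ) arcsinh(λÃ_0/2)`,
`S(Ã)_b = Ã_b / g(λÃ_0/2)`. -/
noncomputable def Smap (lam : ℝ) (B : Fin 4 → ℝ) : Fin 4 → ℝ :=
  fun s => if s = 0 then (2 / lam) * Real.arsinh (lam * B 0 / 2)
           else B s / gfun (lam * B 0 / 2)

/-- The matrix `γ̃(Ã)`. -/
noncomputable def γt (lam : ℝ) (B : Fin 4 → ℝ) : Matrix (Fin 4) (Fin 4) ℝ :=
  fun i j => if i = 0 then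
      (if j = 0 then gfun (lam * B 0 / 2) - lam * B 0 / 2 else -lam * B j / 2)
    else (if i = j then gfun (lam * B 0 / 2) else 0)

/-- The matrix `ρ̃(Ã)`. -/
noncomputable def ρt (lam : ℝ) (B : Fin 4 → ℝ) : Matrix (Fin 4) (Fin 4) ℝ :=
  fun i a => if i = 0 then
      (if a = 0 then 1 / Real.sqrt ((lam * B 0 / 2) ^ 2 + 1)
       else -gpfun (lam * B 0 / 2) * lam * B a / 2)
    else (if i = a then gfun (lam * B 0 / 2) else 0)

/- ---------- auxiliary lemmas ---------- -/

lemma sqrt_pos' (z : ℝ) : 0 < Real.sqrt (z ^ 2 + 1) :=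
  Real.sqrt_pos.2 (by positivity)

lemma gfun_pos (z : ℝ) : 0 < gfun z := by
  have h1 : |z| < Real.sqrt (z ^ 2 + 1) := by
    rw [← Real.sqrt_sq_eq_abs]
    exact Real.sqrt_lt_sqrt (sq_nonneg z) (by linarith)
  have h2 := neg_abs_le z
  unfold gfun; linarith

lemma sqrt_sinh_sq (z : ℝ) : Real.sqrt (Real.sinh z ^ 2 + 1) = Real.cosh z := by
  rw [← Real.cosh_sq, Real.sqrt_sq (Real.cosh_pos z).le]

lemma gfun_sinh (z : ℝ) : gfun (Real.sinh z) = Real.exp z := by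
  rw [gfun, sqrt_sinh_sq, Real.cosh_add_sinh]

lemma gpfun_sinh (z : ℝ) : gpfun (Real.sinh z) = Real.exp z / Real.cosh z := by
  rw [gpfun, sqrt_sinh_sq, Real.cosh_add_sinh]

lemma hasDerivAt_gfun (w : ℝ) : HasDerivAt gfun (gpfun w) w := by
  have h1 : HasDerivAt (fun z : ℝ => z ^ 2 + 1) (2 * w) w := by
    simpa using (hasDerivAt_pow 2 w).add_const 1
  have hs : HasDerivAt (fun z : ℝ => Real.sqrt (z ^ 2 + 1))
      (2 * w / (2 * Real.sqrt (w ^ 2 + 1))) w := h1.sqrt (by positivity)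
  have h := hs.add (hasDerivAt_id w)
  have heq : 2 * w / (2 * Real.sqrt (w ^ 2 + 1)) + 1 = gpfun w := by
    have hpos := sqrt_pos' w
    rw [gpfun]
    field_simp
    ring
  rw [heq] at h
  exact h

/-- derivative of `C ↦ lam * C 0 / 2` -/
lemma hasFDerivAt_inner (lam : ℝ) (A : Fin 4 → ℝ) :
    HasFDerivAt (fun C : Fin 4 → ℝ => lam * C 0 / 2)
      ((lam / 2) • (ContinuousLinearMap.proj 0 : (Fin 4 → ℝ) →L[ℝ] ℝ)) A := by
  have h := ((ContinuousLinearMap.proj (R := ℝ) (φ := fun _ : Fin 4 => ℝ)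
      0).hasFDerivAt (x := A)).const_mul (lam / 2)
  have : (fun C : Fin 4 → ℝ => lam / 2 * (ContinuousLinearMap.proj 0 : (Fin 4 → ℝ) →L[ℝ] ℝ) C)
      = fun C : Fin 4 → ℝ => lam * C 0 / 2 := by
    funext C; simp [ContinuousLinearMap.proj_apply]; ring
  rwa [this] at h

lemma pd_eq {u : (Fin 4 → ℝ) → ℝ} {x : Fin 4 → ℝ} {L : (Fin 4 → ℝ) →L[ℝ] ℝ}
    (h : HasFDerivAt u L x) (k : Fin 4) : pd k u x = L (Pi.single k 1) := by
  rw [pd, h.fderiv]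

lemma pd_T0 (lam : ℝ) (hlam : lam ≠ 0) (A : Fin 4 → ℝ) (k : Fin 4) :
    pd k (fun C => Tmap lam C 0) A
      = if k = 0 then Real.cosh (lam * A 0 / 2) else 0 := by
  have h : HasFDerivAt (fun C : Fin 4 → ℝ => Tmap lam C 0)
      ((2 / lam) • Real.cosh (lam * A 0 / 2) • ((lam / 2) •
        (ContinuousLinearMap.proj 0 : (Fin 4 → ℝ) →L[ℝ] ℝ))) A := by
    have hs := (Real.hasDerivAt_sinh (lam * A 0 / 2)).comp_hasFDerivAt A
      (hasFDerivAt_inner lam A)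
    have := hs.const_mul (2 / lam)
    simpa [Tmap, Function.comp] using this
  rw [pd_eq h k]
  rcases eq_or_ne k 0 with hk | hk
  · simp [hk, Pi.single_apply, ContinuousLinearMap.proj_apply]
    field_simp
  · simp [hk, Pi.single_apply, ContinuousLinearMap.proj_apply]

lemma pd_Tb (lam : ℝ) (A : Fin 4 → ℝ) {b : Fin 4} (hb : b ≠ 0) (k : Fin 4) :
    pd k (fun C => Tmap lam C b) A
      = if k = 0 then lam / 2 * Real.exp (lam * A 0 / 2) * A b
        else if k = b then Real.exp (lam * A 0 / 2) else 0 := by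
  have he : HasFDerivAt (fun C : Fin 4 → ℝ => Real.exp (lam * C 0 / 2))
      (Real.exp (lam * A 0 / 2) • ((lam / 2) •
        (ContinuousLinearMap.proj 0 : (Fin 4 → ℝ) →L[ℝ] ℝ))) A := by
    have := (Real.hasDerivAt_exp (lam * A 0 / 2)).comp_hasFDerivAt A (hasFDerivAt_inner lam A)
    exact this
  have hpb : HasFDerivAt (fun C : Fin 4 → ℝ => C b)
      (ContinuousLinearMap.proj b : (Fin 4 → ℝ) →L[ℝ] ℝ) A :=
    (ContinuousLinearMap.proj (R := ℝ) (φ := fun _ : Fin 4 => ℝ) b).hasFDerivAt (x := A)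
  have h : HasFDerivAt (fun C : Fin 4 → ℝ => Real.exp (lam * C 0 / 2) * C b)
      ((fun C : Fin 4 → ℝ => Real.exp (lam * C 0 / 2)) A •
          (ContinuousLinearMap.proj b : (Fin 4 → ℝ) →L[ℝ] ℝ)
        + (fun C : Fin 4 → ℝ => C b) A • (Real.exp (lam * A 0 / 2) • ((lam / 2) •
            (ContinuousLinearMap.proj 0 : (Fin 4 → ℝ) →L[ℝ] ℝ)))) A := he.mul hpb
  have hfun : (fun C : Fin 4 → ℝ => Tmap lam C b)
      = fun C : Fin 4 → ℝ => Real.exp (lam * C 0 / 2) * C b := by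
    funext C; simp [Tmap, hb]
  rw [pd, hfun, h.fderiv]
  rcases eq_or_ne k 0 with hk | hk
  · subst hk
    simp [Pi.single_apply, ContinuousLinearMap.proj_apply, Ne.symm hb]
    ring
  · rcases eq_or_ne k b with hkb | hkb
    · subst hkb
      simp [hk, Pi.single_apply, ContinuousLinearMap.proj_apply, hb, Ne.symm hb]
    · simp [hk, hkb, Pi.single_apply, ContinuousLinearMap.proj_apply, Ne.symm hkb]

lemma pd_S0 (lam : ℝ) (hlam : lam ≠ 0) (B : Fin 4 → ℝ) (k : Fin 4) :
    pd k (fun C => Smap lam C 0) B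
      = if k = 0 then (Real.sqrt (1 + (lam * B 0 / 2) ^ 2))⁻¹ else 0 := by
  have h : HasFDerivAt (fun C : Fin 4 → ℝ => Smap lam C 0)
      ((2 / lam) • (Real.sqrt (1 + (lam * B 0 / 2) ^ 2))⁻¹ • ((lam / 2) •
        (ContinuousLinearMap.proj 0 : (Fin 4 → ℝ) →L[ℝ] ℝ))) B := by
    have hs := (Real.hasDerivAt_arsinh (lam * B 0 / 2)).comp_hasFDerivAt B
      (hasFDerivAt_inner lam B)
    have := hs.const_mul (2 / lam)
    simpa [Smap, Function.comp] using this
  rw [pd_eq h k]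
  rcases eq_or_ne k 0 with hk | hk
  · have hpos : (0:ℝ) < Real.sqrt (1 + (lam * B 0 / 2) ^ 2) := Real.sqrt_pos.2 (by positivity)
    simp [hk, Pi.single_apply, ContinuousLinearMap.proj_apply]
    field_simp
  · simp [hk, Pi.single_apply, ContinuousLinearMap.proj_apply]

lemma pd_Sb (lam : ℝ) (B : Fin 4 → ℝ) {b : Fin 4} (hb : b ≠ 0) (k : Fin 4) :
    pd k (fun C => Smap lam C b) B
      = if k = 0 then -(B b * (gpfun (lam * B 0 / 2) * (lam / 2)) / gfun (lam * B 0 / 2) ^ 2)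
        else if k = b then (gfun (lam * B 0 / 2))⁻¹ else 0 := by
  set w := lam * B 0 / 2 with hw
  have hg : HasFDerivAt (fun C : Fin 4 → ℝ => (gfun (lam * C 0 / 2))⁻¹)
      ((-(gpfun w) / gfun w ^ 2) • ((lam / 2) •
        (ContinuousLinearMap.proj 0 : (Fin 4 → ℝ) →L[ℝ] ℝ))) B := by
    have hinv : HasDerivAt (fun z => (gfun z)⁻¹) (-(gpfun w) / gfun w ^ 2) w :=
      (hasDerivAt_gfun w).inv (gfun_pos w).ne'
    have := hinv.comp_hasFDerivAt B (hasFDerivAt_inner lam B)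
    exact this
  have hpb : HasFDerivAt (fun C : Fin 4 → ℝ => C b)
      (ContinuousLinearMap.proj b : (Fin 4 → ℝ) →L[ℝ] ℝ) B :=
    (ContinuousLinearMap.proj (R := ℝ) (φ := fun _ : Fin 4 => ℝ) b).hasFDerivAt (x := B)
  have h : HasFDerivAt (fun C : Fin 4 → ℝ => C b * (gfun (lam * C 0 / 2))⁻¹)
      ((fun C : Fin 4 → ℝ => C b) B • ((-(gpfun w) / gfun w ^ 2) • ((lam / 2) •
          (ContinuousLinearMap.proj 0 : (Fin 4 → ℝ) →L[ℝ] ℝ)))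
        + (fun C : Fin 4 → ℝ => (gfun (lam * C 0 / 2))⁻¹) B •
          (ContinuousLinearMap.proj b : (Fin 4 → ℝ) →L[ℝ] ℝ)) B := hpb.mul hg
  have hfun : (fun C : Fin 4 → ℝ => Smap lam C b)
      = fun C : Fin 4 → ℝ => C b * (gfun (lam * C 0 / 2))⁻¹ := by
    funext C; simp [Smap, hb, div_eq_mul_inv]
  rw [pd, hfun, h.fderiv]
  rcases eq_or_ne k 0 with hk | hk
  · subst hk
    simp [Pi.single_apply, ContinuousLinearMap.proj_apply, Ne.symm hb]
    ring
  · rcases eq_or_ne k b with hkb | hkb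
    · subst hkb
      simp [hk, Pi.single_apply, ContinuousLinearMap.proj_apply, hb, Ne.symm hb, ← hw]
    · simp [hk, hkb, Pi.single_apply, ContinuousLinearMap.proj_apply, Ne.symm hkb]

lemma T0_half (lam : ℝ) (hlam : lam ≠ 0) (A : Fin 4 → ℝ) :
    lam * Tmap lam A 0 / 2 = Real.sinh (lam * A 0 / 2) := by
  simp only [Tmap, if_pos rfl, ↓reduceIte]
  field_simp

theorem stmt15 (lam : ℝ) (hlam : lam ≠ 0) :
    (∀ A : Fin 4 → ℝ, Smap lam (Tmap lam A) = A) ∧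
    (∀ B : Fin 4 → ℝ, Tmap lam (Smap lam B) = B) ∧
    (∀ (A : Fin 4 → ℝ) (i j : Fin 4),
      γt lam (Tmap lam A) i j
        = ∑ k, γκ lam A i k * pd k (fun C => Tmap lam C j) A) ∧
    (∀ (A : Fin 4 → ℝ) (i a : Fin 4),
      ρt lam (Tmap lam A) i a
        = ∑ s, pd i (fun C => Smap lam C s) (Tmap lam A) * ρκ lam A s a) := by
  refine ⟨?_, ?_, ?_, ?_⟩
  · -- S ∘ T = id
    intro A
    funext s
    rcases eq_or_ne s 0 with hs | hs
    · subst hs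
      simp only [Smap, if_pos rfl, ↓reduceIte, T0_half lam hlam A, Real.arsinh_sinh]
      field_simp
    · simp only [Smap, if_neg hs]
      rw [T0_half lam hlam A, gfun_sinh]
      simp only [Tmap, if_neg hs]
      rw [mul_comm, mul_div_assoc, div_self (Real.exp_ne_zero _), mul_one]
  · -- T ∘ S = id
    intro B
    funext s
    have hS0 : lam * Smap lam B 0 / 2 = Real.arsinh (lam * B 0 / 2) := by
      simp only [Smap, if_pos rfl, ↓reduceIte]
      field_simp
    have hexp : Real.exp (Real.arsinh (lam * B 0 / 2)) = gfun (lam * B 0 / 2) := by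
      rw [← Real.cosh_add_sinh, Real.cosh_arsinh, Real.sinh_arsinh, gfun,
        add_comm ((lam * B 0 / 2) ^ 2) 1]
    rcases eq_or_ne s 0 with hs | hs
    · subst hs
      simp only [Tmap, if_pos rfl, ↓reduceIte, hS0, Real.sinh_arsinh]
      field_simp
    · simp only [Tmap, if_neg hs]
      rw [hS0, hexp]
      simp only [Smap, if_neg hs]
      rw [mul_comm, div_mul_cancel₀ _ (gfun_pos _).ne']
  · -- gamma relation
    intro A i j
    set z := lam * A 0 / 2 with hz
    have hT0 := T0_half lam hlam A
    have hTb : ∀ b : Fin 4, b ≠ 0 → Tmap lam A b = Real.exp z * A b := by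
      intro b hb; simp [Tmap, hb, hz]
    rcases eq_or_ne j 0 with hj | hj
    · subst hj
      rw [Fin.sum_univ_four]
      simp only [pd_T0 lam hlam A, γκ, γt]
      fin_cases i <;>
        simp [hT0, gfun_sinh, ← hz, ← Real.cosh_add_sinh]
    · rw [Fin.sum_univ_four]
      simp only [pd_Tb lam A hj, γκ, γt]
      fin_cases i <;> fin_cases j <;>
        simp_all (config := { decide := true }) [hT0, hTb, gfun_sinh, ← hz] <;> ring
  · -- rho relation
    intro A i a
    set z := lam * A 0 / 2 with hz
    have hT0 := T0_half lam hlam A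
    have hTb : ∀ b : Fin 4, b ≠ 0 → Tmap lam A b = Real.exp z * A b := by
      intro b hb; simp [Tmap, hb, hz]
    have hsq : Real.sqrt (1 + Real.sinh z ^ 2) = Real.cosh z := by
      rw [add_comm, sqrt_sinh_sq]
    have hsq' : Real.sqrt (Real.sinh z ^ 2 + 1) = Real.cosh z := sqrt_sinh_sq z
    have hA0 : lam * A 0 = 2 * z := by rw [hz]; ring
    have hexp2 : Real.exp (lam * A 0) = Real.exp z * Real.exp z := by
      rw [← Real.exp_add]; congr 1; rw [hz]; ring
    rw [Fin.sum_univ_four]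
    fin_cases i <;> fin_cases a <;>
      simp_all (config := { decide := true }) [pd_S0 lam hlam, pd_Sb lam (Tmap lam A), hT0, hTb, gfun_sinh, gpfun_sinh,
        hsq, hsq', hexp2, ρκ, ρt, ← hz] <;>
      field_simp [(Real.cosh_pos z).ne', Real.exp_ne_zero] <;> ring
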